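/- arXiv:1702.01534 — 3 statements merged into one kernel-verified Lean document; each statement's English description precedes it below -/
import Mathlib

section
/- Let n ≥ 2 and let A = (A^k_{ij,l}) be as above (totally symmetric in i,j,k) with S^j_l = (1/n) ∑_i A^j_{ii,l}. Then ∑ (A^k_{ij,l})² ≥ (3n²/(n+2)) ∑ (S^j_l)², with equality if and only if A^k_{ij,l} = (n/(n+2))(S^k_l δ_{ij} + S^i_l δ_{jk} + S^j_l δ_{ik}) for all i,j,k,l. -/
open Finset

/-- Kronecker delta as a real number. -/
def kron {n : ℕ} (i j : Fin n) : ℝ := if i = j then 1 else 0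

/-!
Put `T = S^k_l δ_ij + S^i_l δ_jk + S^j_l δ_ik`. Pairing an array that is symmetric in its first
three indices with `T` gives three times the pairing of its trace with `S`. Hence `⟨A, T⟩ = 3n|S|²`,
and since `T` is itself symmetric with trace `(n + 2) S`, also `|T|² = 3(n + 2)|S|²`. Expanding
`0 ≤ |A - (n/(n+2)) T|²` then gives `|A|² - 3n²/(n+2) |S|²`, which vanishes exactly when
`A = (n/(n+2)) T`.
-/

section
variable {n : ℕ}

lemma kron_comm (i j : Fin n) : kron i j = kron j i := by
  simp only [kron, eq_comm]

def traceTensor (S : Fin n → Fin n → ℝ) (i j k l : Fin n) : ℝ :=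
  S k l * kron i j + S i l * kron j k + S j l * kron i k

lemma traceTensor_swap_left (S : Fin n → Fin n → ℝ) (i j k l : Fin n) :
    traceTensor S i j k l = traceTensor S j i k l := by
  simp only [traceTensor, kron_comm i j, kron_comm i k, kron_comm j k]
  ring

lemma traceTensor_swap_right (S : Fin n → Fin n → ℝ) (i j k l : Fin n) :
    traceTensor S i j k l = traceTensor S i k j l := by
  simp only [traceTensor, kron_comm i j, kron_comm i k, kron_comm j k]
  ring

lemma sum_traceTensor_diag (S : Fin n → Fin n → ℝ) (k l : Fin n) :
    ∑ i, traceTensor S i i k l = (n + 2) * S k l := by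
  simp only [traceTensor, kron, ↓reduceIte, mul_one, mul_ite, mul_zero, sum_add_distrib,
    sum_const, card_univ, Fintype.card_fin, nsmul_eq_mul, sum_ite_eq', mem_univ]
  ring

lemma sum_mul_traceTensor (A : Fin n → Fin n → Fin n → Fin n → ℝ)
    (hsym1 : ∀ i j k l, A i j k l = A j i k l)
    (hsym2 : ∀ i j k l, A i j k l = A i k j l) (S : Fin n → Fin n → ℝ) :
    ∑ i, ∑ j, ∑ k, ∑ l, A i j k l * traceTensor S i j k l
      = 3 * ∑ k, ∑ l, (∑ i, A i i k l) * S k l := by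
  have h1 : ∑ i, ∑ k, ∑ l, A i i k l * S k l = ∑ k, ∑ l, (∑ i, A i i k l) * S k l := by
    simp only [sum_mul]
    rw [sum_comm]
    exact sum_congr rfl fun _ _ => sum_comm
  have h2 : ∑ i, ∑ j, ∑ l, A i j j l * S i l = ∑ k, ∑ l, (∑ i, A i i k l) * S k l := by
    refine sum_congr rfl fun k _ => ?_
    rw [sum_comm]
    refine sum_congr rfl fun l _ => ?_
    rw [sum_mul]
    exact sum_congr rfl fun i _ => by rw [hsym1, hsym2]
  have h3 : ∑ i, ∑ j, ∑ l, A i j i l * S j l = ∑ k, ∑ l, (∑ i, A i i k l) * S k l := by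
    rw [sum_comm]
    refine sum_congr rfl fun k _ => ?_
    rw [sum_comm]
    refine sum_congr rfl fun l _ => ?_
    rw [sum_mul]
    exact sum_congr rfl fun i _ => by rw [hsym2]
  simp only [traceTensor, kron, mul_ite, mul_one, mul_zero, mul_add, sum_add_distrib,
    sum_ite_irrel, sum_const_zero, sum_ite_eq, mem_univ, ↓reduceIte, h1, h2, h3]
  ring

lemma sum_sq_sub_mul (a t : Fin n → Fin n → Fin n → Fin n → ℝ) (c : ℝ) :
    ∑ i, ∑ j, ∑ k, ∑ l, (a i j k l - c * t i j k l) ^ 2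
      = ∑ i, ∑ j, ∑ k, ∑ l, a i j k l ^ 2
        - 2 * c * ∑ i, ∑ j, ∑ k, ∑ l, a i j k l * t i j k l
        + c ^ 2 * ∑ i, ∑ j, ∑ k, ∑ l, t i j k l * t i j k l := by
  simp only [mul_sum, ← sum_sub_distrib, ← sum_add_distrib]
  congr! 8
  ring

lemma sum_sq_eq_zero_iff (f : Fin n → Fin n → Fin n → Fin n → ℝ) :
    ∑ i, ∑ j, ∑ k, ∑ l, f i j k l ^ 2 = 0 ↔ ∀ i j k l, f i j k l = 0 := by
  have := Fintype.sum_eq_zero_iff_of_nonneg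
    (f := fun x : Fin n × Fin n × Fin n × Fin n => f x.1 x.2.1 x.2.2.1 x.2.2.2 ^ 2)
    (fun _ => sq_nonneg _)
  simpa [Fintype.sum_prod_type, funext_iff] using this

lemma sum_sq_sub_traceTensor (A : Fin n → Fin n → Fin n → Fin n → ℝ)
    (hsym1 : ∀ i j k l, A i j k l = A j i k l)
    (hsym2 : ∀ i j k l, A i j k l = A i k j l) (S : Fin n → Fin n → ℝ)
    (hS : ∀ k l, ∑ i, A i i k l = n * S k l) :
    ∑ i, ∑ j, ∑ k, ∑ l, (A i j k l - n / (n + 2) * traceTensor S i j k l) ^ 2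
      = ∑ i, ∑ j, ∑ k, ∑ l, A i j k l ^ 2 - 3 * n ^ 2 / (n + 2) * ∑ k, ∑ l, S k l ^ 2 := by
  have hAT : ∑ i, ∑ j, ∑ k, ∑ l, A i j k l * traceTensor S i j k l
      = 3 * n * ∑ k, ∑ l, S k l ^ 2 := by
    simp only [sum_mul_traceTensor A hsym1 hsym2, hS, mul_sum]
    ring_nf
  have hTT : ∑ i, ∑ j, ∑ k, ∑ l, traceTensor S i j k l * traceTensor S i j k l
      = 3 * (n + 2) * ∑ k, ∑ l, S k l ^ 2 := by
    simp only [sum_mul_traceTensor _ (traceTensor_swap_left S) (traceTensor_swap_right S),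
      sum_traceTensor_diag, mul_sum]
    ring_nf
  rw [sum_sq_sub_mul, hAT, hTT]
  field_simp
  ring

lemma sum_diag_eq_mul_of_eq_trace (A : Fin n → Fin n → Fin n → Fin n → ℝ)
    (S : Fin n → Fin n → ℝ) (hS : ∀ j l, S j l = (1 / (n : ℝ)) * ∑ i, A i i j l) (j l : Fin n) :
    ∑ i, A i i j l = n * S j l := by
  have : (n : ℝ) ≠ 0 := by exact_mod_cast j.pos.ne'
  rw [hS]
  field_simp

end

theorem stmt_1_general (n : ℕ)
    (A : Fin n → Fin n → Fin n → Fin n → ℝ)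
    (hsym1 : ∀ i j k l, A i j k l = A j i k l)
    (hsym2 : ∀ i j k l, A i j k l = A i k j l)
    (S : Fin n → Fin n → ℝ)
    (hS : ∀ j l, S j l = (1 / (n : ℝ)) * ∑ i, A i i j l) :
    (3 * (n : ℝ) ^ 2 / ((n : ℝ) + 2)) * (∑ j, ∑ l, (S j l) ^ 2)
      ≤ ∑ i, ∑ j, ∑ k, ∑ l, (A i j k l) ^ 2
    ∧ ((∑ i, ∑ j, ∑ k, ∑ l, (A i j k l) ^ 2
          = (3 * (n : ℝ) ^ 2 / ((n : ℝ) + 2)) * (∑ j, ∑ l, (S j l) ^ 2))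
        ↔ ∀ i j k l, A i j k l =
            ((n : ℝ) / ((n : ℝ) + 2)) *
              (S k l * kron i j + S i l * kron j k + S j l * kron i k)) := by
  have key := sum_sq_sub_traceTensor A hsym1 hsym2 S (sum_diag_eq_mul_of_eq_trace A S hS)
  have hnonneg : 0 ≤ ∑ i, ∑ j, ∑ k, ∑ l,
      (A i j k l - n / (n + 2) * traceTensor S i j k l) ^ 2 :=
    sum_nonneg fun _ _ => sum_nonneg fun _ _ => sum_nonneg fun _ _ => sum_nonneg fun _ _ =>
      sq_nonneg _
  refine ⟨by linarith, ?_⟩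
  rw [← sub_eq_zero, ← key, sum_sq_eq_zero_iff]
  simp only [sub_eq_zero, traceTensor]

theorem stmt_1 (n : ℕ) (hn : 2 ≤ n)
    (A : Fin n → Fin n → Fin n → Fin n → ℝ)
    (hsym1 : ∀ i j k l, A i j k l = A j i k l)
    (hsym2 : ∀ i j k l, A i j k l = A i k j l)
    (S : Fin n → Fin n → ℝ)
    (hS : ∀ j l, S j l = (1 / (n : ℝ)) * ∑ i, A i i j l) :
    (3 * (n : ℝ) ^ 2 / ((n : ℝ) + 2)) * (∑ j, ∑ l, (S j l) ^ 2)
      ≤ ∑ i, ∑ j, ∑ k, ∑ l, (A i j k l) ^ 2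
    ∧ ((∑ i, ∑ j, ∑ k, ∑ l, (A i j k l) ^ 2
          = (3 * (n : ℝ) ^ 2 / ((n : ℝ) + 2)) * (∑ j, ∑ l, (S j l) ^ 2))
        ↔ ∀ i j k l, A i j k l =
            ((n : ℝ) / ((n : ℝ) + 2)) *
              (S k l * kron i j + S i l * kron j k + S j l * kron i k)) :=
  stmt_1_general n A hsym1 hsym2 S hS
end

section
/- Let n ≥ 2, let T = (T^j_l) be a symmetric n×n real matrix, and suppose the array K^k_{ij,l} := (n/(n+2))(T^k_l δ_{ij} + T^i_l δ_{jk} + T^j_l δ_{ik}) is also symmetric in the indices k and l (i.e., K^k_{ij,l} = K^l_{ij,k} for all i,j,k,l). Then there exists μ ∈ ℝ, namely μ = (1/(n+2)) ∑_l T^l_l, such that K^k_{ij,l} = μ(δ_{kl} δ_{ij} + δ_{il} δ_{jk} + δ_{jl} δ_{ik}) for all i,j,k,l. -/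
open Finset

/-- The symmetrization `T^k_l δ_ij + T^i_l δ_jk + T^j_l δ_ik` of `T ⊗ δ` over the indices `i, j, k`. -/
def kronSymm {n : ℕ} (T : Fin n → Fin n → ℝ) (i j k l : Fin n) : ℝ :=
  T k l * kron i j + T i l * kron j k + T j l * kron i k

section KronSymm

variable {n : ℕ} {T : Fin n → Fin n → ℝ}

@[simp]
lemma kron_self (i : Fin n) : kron i i = 1 := if_pos rfl

lemma kron_of_ne {i j : Fin n} (h : i ≠ j) : kron i j = 0 := if_neg h

/-- Taking `i = j = k` gives `3 T_kl = T_lk` off the diagonal, and applying this twice gives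
`9 T_kl = T_kl`. -/
lemma offDiag_eq_zero_of_kronSymm_comm (hS : ∀ i j k l, kronSymm T i j k l = kronSymm T i j l k)
    {k l : Fin n} (hkl : k ≠ l) : T k l = 0 := by
  have hkl' := hS k k k l
  have hlk := hS l l l k
  simp only [kronSymm, kron_self, kron_of_ne hkl, kron_of_ne hkl.symm] at hkl' hlk
  linarith

lemma diag_eq_of_kronSymm_comm (hS : ∀ i j k l, kronSymm T i j k l = kronSymm T i j l k)
    (k l : Fin n) : T k k = T l l := by
  rcases eq_or_ne k l with rfl | hkl
  · rfl
  · have h := hS k l k l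
    simp only [kronSymm, kron_self, kron_of_ne hkl, kron_of_ne hkl.symm] at h
    linarith

lemma eq_mul_kron_of_kronSymm_comm (hS : ∀ i j k l, kronSymm T i j k l = kronSymm T i j l k)
    (m k l : Fin n) : T k l = T m m * kron k l := by
  rcases eq_or_ne k l with rfl | hkl
  · rw [kron_self, mul_one, diag_eq_of_kronSymm_comm hS]
  · rw [kron_of_ne hkl, mul_zero, offDiag_eq_zero_of_kronSymm_comm hS hkl]

lemma trace_eq_of_kronSymm_comm (hS : ∀ i j k l, kronSymm T i j k l = kronSymm T i j l k)
    (m : Fin n) : ∑ l, T l l = n * T m m := by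
  simp [diag_eq_of_kronSymm_comm hS _ m]

lemma kronSymm_eq_mul_of_kronSymm_comm (hS : ∀ i j k l, kronSymm T i j k l = kronSymm T i j l k)
    (m i j k l : Fin n) : kronSymm T i j k l = T m m * kronSymm kron i j k l := by
  rw [kronSymm, eq_mul_kron_of_kronSymm_comm hS m k l, eq_mul_kron_of_kronSymm_comm hS m i l,
    eq_mul_kron_of_kronSymm_comm hS m j l, kronSymm]
  ring

end KronSymm

theorem stmt_3_general (n : ℕ)
    (T : Fin n → Fin n → ℝ)
    (K : Fin n → Fin n → Fin n → Fin n → ℝ)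
    (hK : ∀ i j k l, K i j k l =
        ((n : ℝ) / ((n : ℝ) + 2)) *
          (T k l * kron i j + T i l * kron j k + T j l * kron i k))
    (hkl : ∀ i j k l, K i j k l = K i j l k) :
    ∃ μ : ℝ, μ = (1 / ((n : ℝ) + 2)) * (∑ l, T l l) ∧
      ∀ i j k l, K i j k l =
        μ * (kron k l * kron i j + kron i l * kron j k + kron j l * kron i k) := by
  refine ⟨_, rfl, fun i j k l => ?_⟩
  have hn : (n : ℝ) ≠ 0 := Nat.cast_ne_zero.mpr i.pos.ne'
  have hS : ∀ i j k l, kronSymm T i j k l = kronSymm T i j l k := fun i j k l =>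
    mul_left_cancel₀ (by positivity) ((hK i j k l).symm.trans ((hkl i j k l).trans (hK i j l k)))
  change K i j k l = _ * kronSymm kron i j k l
  rw [hK, ← kronSymm, kronSymm_eq_mul_of_kronSymm_comm hS i, trace_eq_of_kronSymm_comm hS i]
  field_simp

theorem stmt_3 (n : ℕ) (hn : 2 ≤ n)
    (T : Fin n → Fin n → ℝ)
    (hsym : ∀ j l, T j l = T l j)
    (K : Fin n → Fin n → Fin n → Fin n → ℝ)
    (hK : ∀ i j k l, K i j k l =
        ((n : ℝ) / ((n : ℝ) + 2)) *
          (T k l * kron i j + T i l * kron j k + T j l * kron i k))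
    (hkl : ∀ i j k l, K i j k l = K i j l k) :
    ∃ μ : ℝ, μ = (1 / ((n : ℝ) + 2)) * (∑ l, T l l) ∧
      ∀ i j k l, K i j k l =
        μ * (kron k l * kron i j + kron i l * kron j k + kron j l * kron i k) :=
  stmt_3_general n T K hK hkl
end

section
/- Let ε = ±1 and let f, g : ℝ → ℝ be differentiable functions with f' = 3μ and g' = μ for a constant μ ∈ ℝ, and suppose (2g(s) − f(s))(g(s)² − f(s)g(s) + ε) = 0 for all s ∈ ℝ. Then μ = 0. -/
/-!
By the mean value theorem `f` and `g` are affine with slopes `3μ` and `μ`, so the vanishing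
product is a polynomial in `s` that is identically zero. Its `s³` coefficient is `2μ³`; the third
finite difference at `0, 1, 2, 3` extracts `12μ³ = 0` (the discrete form of differentiating three
times).
-/

theorem eq_add_mul_of_hasDerivAt_const {u : ℝ → ℝ} {c : ℝ} (hu : ∀ s, HasDerivAt u c s)
    (s : ℝ) : u s = u 0 + c * s := by
  have hderiv : ∀ t, HasDerivAt (fun t => u t - c * t) 0 t := fun t => by
    have h := (hu t).sub ((hasDerivAt_id t).const_mul c)
    rwa [mul_one, sub_self] at h
  have hconst := is_const_of_deriv_eq_zero (fun t => (hderiv t).differentiableAt)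
    (fun t => (hderiv t).deriv) s 0
  simp only [mul_zero, sub_zero] at hconst
  linarith

theorem eq_zero_of_forall_mul_eq_zero_of_affine {a b μ ε : ℝ}
    (h : ∀ s : ℝ, (2 * (b + μ * s) - (a + 3 * μ * s)) *
      ((b + μ * s) ^ 2 - (a + 3 * μ * s) * (b + μ * s) + ε) = 0) :
    μ = 0 := by
  have hcube : 12 * μ ^ 3 = 0 := by
    linear_combination h 3 - 3 * h 2 + 3 * h 1 - h 0
  exact pow_eq_zero_iff three_ne_zero |>.mp (by linarith)

theorem stmt_7_general (ε : ℝ) (μ : ℝ)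
    (f g : ℝ → ℝ)
    (hf : ∀ s, HasDerivAt f (3 * μ) s)
    (hg : ∀ s, HasDerivAt g μ s)
    (hvan : ∀ s, (2 * g s - f s) * ((g s) ^ 2 - f s * g s + ε) = 0) :
    μ = 0 := by
  refine eq_zero_of_forall_mul_eq_zero_of_affine (a := f 0) (b := g 0) (ε := ε) fun s => ?_
  rw [← eq_add_mul_of_hasDerivAt_const hf, ← eq_add_mul_of_hasDerivAt_const hg]
  exact hvan s

theorem stmt_7 (ε : ℝ) (hε : ε = 1 ∨ ε = -1) (μ : ℝ)
    (f g : ℝ → ℝ)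
    (hf : ∀ s, HasDerivAt f (3 * μ) s)
    (hg : ∀ s, HasDerivAt g μ s)
    (hvan : ∀ s, (2 * g s - f s) * ((g s) ^ 2 - f s * g s + ε) = 0) :
    μ = 0 :=
  stmt_7_general ε μ f g hf hg hvan
end
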